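/- Let L be a finite-dimensional nilpotent non-abelian Lie algebra of nilpotency class c. Then dim(L ∧ L) + dim Im γ'₂ ≤ dim(L/L² ∧ L/L²) + Σ_{i=2}^{c} dim(γ_i(L)/γ_{i+1}(L) ⊗ (L/Z(L))^{ab}), where γ'₂ : ((L/Z(L))^{ab})^{⊗3} → (L²/L³) ⊗ (L/Z(L))^{ab} sends x̄ ⊗ ȳ ⊗ z̄ to ([x,y]+L³) ⊗ z̄ + ([z,x]+L³) ⊗ ȳ + ([y,z]+L³) ⊗ x̄. -/

import Mathlib

open Module TensorProduct


/-- The dimension of the nonabelian exterior square `L ∧ L ≅ F²/[R,F]` of a Lie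
algebra, computed from a free presentation `π : FreeLieAlgebra K X → L`. -/
noncomputable def lieExteriorSquareDim (K : Type) [Field K] (X : Type) {L : Type}
    [LieRing L] [LieAlgebra K L] (π : FreeLieAlgebra K X →ₗ⁅K⁆ L) : ℕ :=
  let F := FreeLieAlgebra K X
  let R : LieIdeal K F := π.ker
  let F2 : LieIdeal K F := LieModule.lowerCentralSeries K F F 1
  Module.finrank K
    (↥(F2 : Submodule K F) ⧸
      (Submodule.comap (F2 : Submodule K F).subtype
        ((⁅R, (⊤ : LieIdeal K F)⁆ : LieIdeal K F) : Submodule K F)))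

/-- `L` is nilpotent of nilpotency class exactly `c`: in the paper's notation
`γ_{c+1}(L) = 0` and `γ_k(L) ≠ 0` for `k ≤ c` (Mathlib's `lowerCentralSeries` is indexed
so that `γ_{k+1}(L) = lowerCentralSeries K L L k`). -/
def lieNilpotencyClass (K : Type) [Field K] (L : Type) [LieRing L] [LieAlgebra K L]
    (c : ℕ) : Prop :=
  LieModule.lowerCentralSeries K L L c = ⊥ ∧
    ∀ k < c, LieModule.lowerCentralSeries K L L k ≠ ⊥


lemma lie_mem_lowerCentral_one (K : Type) [Field K] {L : Type} [LieRing L]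
    [LieAlgebra K L] (x y : L) : ⁅x, y⁆ ∈ LieModule.lowerCentralSeries K L L 1 := by
  rw [show (1 : ℕ) = 0 + 1 from rfl, LieModule.lowerCentralSeries_succ]
  exact LieSubmodule.lie_mem_lie (LieSubmodule.mem_top x) (LieSubmodule.mem_top y)

/-- The term `γ_{j+1}(L)` of the lower central series, as a submodule. -/
noncomputable abbrev lieLcs (K : Type) [Field K] (L : Type) [LieRing L] [LieAlgebra K L]
    (j : ℕ) : Submodule K L :=
  ((LieModule.lowerCentralSeries K L L j : LieSubmodule K L L) : Submodule K L)

/-- The quotient `L²/L³`. -/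
noncomputable abbrev lieQ23 (K : Type) [Field K] (L : Type) [LieRing L] [LieAlgebra K L] :
    Type :=
  ↥(lieLcs K L 1) ⧸ (Submodule.comap (lieLcs K L 1).subtype (lieLcs K L 2))

/-- The class of `⁅x,y⁆ + L³` in `L²/L³`. -/
noncomputable def lieBr23 (K : Type) [Field K] {L : Type} [LieRing L] [LieAlgebra K L]
    (x y : L) : lieQ23 K L :=
  Submodule.Quotient.mk ⟨⁅x, y⁆, lie_mem_lowerCentral_one K x y⟩

/-- The abelianization `(L/Z(L))^{ab} = L/(L² + Z(L))` of `L/Z(L)`. -/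
noncomputable abbrev lieZab (K : Type) [Field K] (L : Type) [LieRing L] [LieAlgebra K L] :
    Type :=
  L ⧸ (lieLcs K L 1 ⊔ ((LieAlgebra.center K L : LieIdeal K L) : Submodule K L))

/-!
Via Hopf's formula, `L ∧ L = F²/[R,F]` is spanned by the classes `w(x, y)` of brackets of lifts,
and `w` is an alternating pairing with `w(x, [y,z]) = w([x,y], z) + w(y, [x,z])`. Filter `L ∧ L`
by `M_j = span {w(a, z) | a ∈ γ_{j+1}(L)}`, so that `M_0 = L ∧ L` and `M_c = 0`. The top layer
`M_0/M_1` is an image of `⋀²(L/L²)`. For `j ≥ 1`, since `w(γ_{j+1}(L), L²) ⊆ M_{j+1}` and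
`w(L², Z(L)) = 0`, the layer `M_j/M_{j+1}` is an image of `γ_{j+1}/γ_{j+2} ⊗ (L/Z(L))^{ab}` under
`ā ⊗ z̄ ↦ w(a, z)`. For `j = 1` the Jacobi identity `w([x,y],z) + w([z,x],y) + w([y,z],x) = 0`
says that this map kills the image of `γ'₂`, which accounts for the extra term.
-/

namespace Submodule

variable {K V : Type*} [DivisionRing K] [AddCommGroup V] [Module K V] [FiniteDimensional K V]

theorem finrank_map_mkQ_add_finrank {M N : Submodule K V} (hNM : N ≤ M) :
    finrank K (M.map N.mkQ) + finrank K N = finrank K M := by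
  have hrange : LinearMap.range (N.mkQ ∘ₗ M.subtype) = M.map N.mkQ := by
    rw [LinearMap.range_comp, range_subtype]
  have hker : LinearMap.ker (N.mkQ ∘ₗ M.subtype) = N.comap M.subtype := by
    rw [LinearMap.ker_comp, ker_mkQ]
  rw [← hrange, ← (comapSubtypeEquivOfLe hNM).finrank_eq, ← hker]
  exact LinearMap.finrank_range_add_finrank_ker _

theorem finrank_eq_sum_finrank_map_mkQ_add {M : ℕ → Submodule K V} (hM : Antitone M) (n : ℕ) :
    finrank K (M 0) = ∑ j ∈ Finset.range n, finrank K ((M j).map (M (j + 1)).mkQ)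
      + finrank K (M n) := by
  induction n with
  | zero => simp
  | succ n ih =>
    rw [ih, Finset.sum_range_succ, add_assoc,
      finrank_map_mkQ_add_finrank (hM n.le_succ)]

end Submodule

def LinearMap.toAlternatingMapFinTwo {R M N : Type*} [CommRing R] [AddCommGroup M] [Module R M]
    [AddCommGroup N] [Module R N] (B : M →ₗ[R] M →ₗ[R] N) (hB : ∀ x, B x x = 0) :
    M [⋀^Fin 2]→ₗ[R] N where
  toFun v := B (v 0) (v 1)
  map_update_add' v i x y := by
    fin_cases i <;> simp
  map_update_smul' v i c x := by
    fin_cases i <;> simp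
  map_eq_zero_of_eq' v i j hv hij := by
    fin_cases i <;> fin_cases j <;> simp_all

/-- The defining relations of the nonabelian exterior square `L ∧ L`, with `w x y` read as
`x ∧ y`. -/
structure LieAlgebra.IsExteriorPairing {K L E : Type*} [CommRing K] [LieRing L] [LieAlgebra K L]
    [AddCommGroup E] [Module K E] (w : L →ₗ[K] L →ₗ[K] E) : Prop where
  apply_self : ∀ x, w x x = 0
  apply_lie : ∀ x y z, w x ⁅y, z⁆ = w ⁅x, y⁆ z + w y ⁅x, z⁆

namespace LieAlgebra.IsExteriorPairing

variable {K L E : Type*} [CommRing K] [LieRing L] [LieAlgebra K L]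
    [AddCommGroup E] [Module K E] {w : L →ₗ[K] L →ₗ[K] E}

theorem of_surjective {F : Type*} [LieRing F] [LieAlgebra K F] {π : F →ₗ⁅K⁆ L}
    (hπ : Function.Surjective π) {β : F →ₗ[K] F →ₗ[K] E} (hβ : IsExteriorPairing β)
    (h : ∀ f g, w (π f) (π g) = β f g) : IsExteriorPairing w where
  apply_self x := by
    obtain ⟨f, rfl⟩ := hπ x
    rw [h, hβ.apply_self]
  apply_lie x y z := by
    obtain ⟨f, rfl⟩ := hπ x
    obtain ⟨g, rfl⟩ := hπ y
    obtain ⟨k, rfl⟩ := hπ z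
    rw [← LieHom.map_lie, ← LieHom.map_lie, ← LieHom.map_lie, h, h, h, hβ.apply_lie]

variable (hw : IsExteriorPairing w)
include hw

theorem apply_swap (x y : L) : w y x = -w x y := by
  have h := hw.apply_self (x + y)
  simp only [map_add, LinearMap.add_apply, hw.apply_self, zero_add, add_zero] at h
  exact eq_neg_of_add_eq_zero_left h

theorem jacobi (x y z : L) : w ⁅x, y⁆ z + w ⁅z, x⁆ y + w ⁅y, z⁆ x = 0 := by
  have h := hw.apply_lie z x y
  rw [hw.apply_swap ⁅x, y⁆, hw.apply_swap ⁅z, y⁆, ← lie_skew z y] at h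
  simp only [map_neg, LinearMap.neg_apply, neg_neg] at h
  linear_combination (norm := module) -h

end LieAlgebra.IsExteriorPairing

theorem lieLcs_one_le {K : Type} [Field K] {L : Type} [LieRing L] [LieAlgebra K L]
    {p : Submodule K L} (h : ∀ x y : L, ⁅x, y⁆ ∈ p) : lieLcs K L 1 ≤ p := by
  rw [lieLcs, LieIdeal.toLieSubalgebra_toSubmodule, LieModule.lowerCentralSeries_succ,
    LieModule.lowerCentralSeries_zero, LieSubmodule.lieIdeal_oper_eq_linear_span',
    Submodule.span_le]
  rintro _ ⟨x, -, y, -, rfl⟩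
  exact h x y

theorem lie_mem_lieLcs_succ {K : Type} [Field K] {L : Type} [LieRing L] [LieAlgebra K L]
    {j : ℕ} {a : L} (ha : a ∈ lieLcs K L j) (x : L) : ⁅a, x⁆ ∈ lieLcs K L (j + 1) := by
  rw [← lie_skew]
  refine neg_mem ?_
  rw [lieLcs, LieModule.lowerCentralSeries_succ]
  exact LieSubmodule.lie_mem_lie (LieSubmodule.mem_top x) ha

namespace LieAlgebra

variable {K : Type} [Field K] {L : Type} [LieRing L] [LieAlgebra K L]
  {E : Type*} [AddCommGroup E] [Module K E]

noncomputable def pairingFiltration (w : L →ₗ[K] L →ₗ[K] E) (j : ℕ) : Submodule K E :=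
  Submodule.map₂ w (lieLcs K L j) ⊤

theorem pairingFiltration_antitone (w : L →ₗ[K] L →ₗ[K] E) : Antitone (pairingFiltration w) :=
  fun _ _ hij => Submodule.map₂_le_map₂_left
    (LieModule.antitone_lowerCentralSeries K L L hij)

theorem pairingFiltration_zero (w : L →ₗ[K] L →ₗ[K] E) :
    pairingFiltration w 0 = Submodule.map₂ w ⊤ ⊤ := by
  rw [pairingFiltration, lieLcs, LieIdeal.toLieSubalgebra_toSubmodule,
    LieModule.lowerCentralSeries_zero, LieSubmodule.top_toSubmodule]

theorem pairingFiltration_eq_bot (w : L →ₗ[K] L →ₗ[K] E) {c : ℕ}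
    (hc : LieModule.lowerCentralSeries K L L c = ⊥) : pairingFiltration w c = ⊥ := by
  rw [pairingFiltration, lieLcs, LieIdeal.toLieSubalgebra_toSubmodule, hc,
    LieSubmodule.bot_toSubmodule, Submodule.map₂_bot_left]

/-- The map `γ'₂` of the paper. -/
def IsGammaTwoPrime
    (g : (lieZab K L ⊗[K] (lieZab K L ⊗[K] lieZab K L)) →ₗ[K] lieQ23 K L ⊗[K] lieZab K L) :
    Prop :=
  ∀ x y z : L,
    g (Submodule.Quotient.mk x ⊗ₜ (Submodule.Quotient.mk y ⊗ₜ Submodule.Quotient.mk z)) =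
      lieBr23 K x y ⊗ₜ Submodule.Quotient.mk z + lieBr23 K z x ⊗ₜ Submodule.Quotient.mk y
        + lieBr23 K y z ⊗ₜ Submodule.Quotient.mk x

namespace IsExteriorPairing

variable {w : L →ₗ[K] L →ₗ[K] E} (hw : IsExteriorPairing w)
include hw

theorem apply_mem_pairingFiltration_succ {j : ℕ} {a z : L} (ha : a ∈ lieLcs K L j)
    (hz : z ∈ lieLcs K L 1) : w a z ∈ pairingFiltration w (j + 1) := by
  refine lieLcs_one_le (p := (pairingFiltration w (j + 1)).comap (w a)) (fun x y => ?_) hz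
  rw [Submodule.mem_comap, hw.apply_lie, hw.apply_swap ⁅a, y⁆]
  exact add_mem (Submodule.apply_mem_map₂ _ (lie_mem_lieLcs_succ ha x) trivial)
    (neg_mem (Submodule.apply_mem_map₂ _ (lie_mem_lieLcs_succ ha y) trivial))

theorem apply_eq_zero_of_mem_center {a z : L} (ha : a ∈ lieLcs K L 1) (hz : z ∈ center K L) :
    w a z = 0 := by
  have hz' : ∀ x : L, ⁅z, x⁆ = 0 := fun x => by
    rw [← lie_skew, (LieModule.mem_maxTrivSubmodule K L L z).mp hz x, neg_zero]
  refine lieLcs_one_le (p := LinearMap.ker (w.flip z)) (fun x y => ?_) ha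
  rw [LinearMap.mem_ker, LinearMap.flip_apply, hw.apply_swap z, hw.apply_lie, hz' x, hz' y]
  simp

theorem apply_mem_pairingFiltration_succ_of_mem_sup {j : ℕ} (hj : 1 ≤ j) {a z : L}
    (ha : a ∈ lieLcs K L j) (hz : z ∈ lieLcs K L 1 ⊔ (center K L : Submodule K L)) :
    w a z ∈ pairingFiltration w (j + 1) := by
  obtain ⟨z₁, hz₁, z₂, hz₂, rfl⟩ := Submodule.mem_sup.mp hz
  rw [map_add, hw.apply_eq_zero_of_mem_center
    (LieModule.antitone_lowerCentralSeries K L L hj ha) hz₂, add_zero]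
  exact hw.apply_mem_pairingFiltration_succ ha hz₁

noncomputable def gradedMap (j : ℕ) (hj : 1 ≤ j) :
    ((↥(lieLcs K L j) ⧸ (lieLcs K L (j + 1)).comap (lieLcs K L j).subtype) ⊗[K] lieZab K L)
      →ₗ[K] E ⧸ pairingFiltration w (j + 1) :=
  TensorProduct.lift <| LinearMap.liftQ₂ _ _
    ((w.compr₂ (pairingFiltration w (j + 1)).mkQ) ∘ₗ (lieLcs K L j).subtype)
    (fun _ ha => LinearMap.ext fun _ => (Submodule.Quotient.mk_eq_zero _).mpr
      (Submodule.apply_mem_map₂ _ ha trivial))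
    (fun _ hz => LinearMap.ext fun a => (Submodule.Quotient.mk_eq_zero _).mpr
      (hw.apply_mem_pairingFiltration_succ_of_mem_sup hj a.2 hz))

theorem gradedMap_tmul (j : ℕ) (hj : 1 ≤ j) (a : lieLcs K L j) (z : L) :
    hw.gradedMap j hj (Submodule.Quotient.mk a ⊗ₜ Submodule.Quotient.mk z) =
      Submodule.Quotient.mk (w a z) :=
  rfl

theorem mkQ_apply_mem_pairingFiltration_one (x y : L)
    (h : x ∈ lieLcs K L 1 ∨ y ∈ lieLcs K L 1) :
    (pairingFiltration w 1).mkQ (w x y) = 0 := by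
  rw [Submodule.mkQ_apply, Submodule.Quotient.mk_eq_zero]
  rcases h with hx | hy
  · exact Submodule.apply_mem_map₂ _ hx trivial
  · rw [hw.apply_swap]
    exact neg_mem (Submodule.apply_mem_map₂ _ hy trivial)

noncomputable def wedgeMap : ⋀[K]^2 (L ⧸ lieLcs K L 1) →ₗ[K] E ⧸ pairingFiltration w 1 :=
  exteriorPower.alternatingMapLinearEquiv <| LinearMap.toAlternatingMapFinTwo
    (LinearMap.liftQ₂ _ _ (w.compr₂ (pairingFiltration w 1).mkQ)
      (fun x hx => LinearMap.ext fun y => hw.mkQ_apply_mem_pairingFiltration_one x y (.inl hx))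
      (fun y hy => LinearMap.ext fun x => hw.mkQ_apply_mem_pairingFiltration_one x y (.inr hy)))
    (fun v => Submodule.Quotient.induction_on _ v fun x => by
      show (pairingFiltration w 1).mkQ (w x x) = 0
      rw [hw.apply_self, map_zero])

theorem wedgeMap_ιMulti (x y : L) :
    hw.wedgeMap (exteriorPower.ιMulti K 2 ![Submodule.Quotient.mk x, Submodule.Quotient.mk y]) =
      Submodule.Quotient.mk (w x y) := by
  rw [wedgeMap, exteriorPower.alternatingMapLinearEquiv_apply_ιMulti]
  rfl

theorem map_mkQ_pairingFiltration_zero_le_range :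
    (pairingFiltration w 0).map (pairingFiltration w 1).mkQ ≤ LinearMap.range hw.wedgeMap := by
  refine Submodule.map_le_iff_le_comap.mpr (Submodule.map₂_le.mpr ?_)
  exact fun x _ y _ => ⟨_, hw.wedgeMap_ιMulti x y⟩

theorem map_mkQ_pairingFiltration_le_range_gradedMap (j : ℕ) (hj : 1 ≤ j) :
    (pairingFiltration w j).map (pairingFiltration w (j + 1)).mkQ ≤
      LinearMap.range (hw.gradedMap j hj) := by
  refine Submodule.map_le_iff_le_comap.mpr (Submodule.map₂_le.mpr ?_)
  exact fun a ha z _ => ⟨_, hw.gradedMap_tmul j hj ⟨a, ha⟩ z⟩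

theorem range_le_ker_gradedMap_one
    (g : (lieZab K L ⊗[K] (lieZab K L ⊗[K] lieZab K L)) →ₗ[K] lieQ23 K L ⊗[K] lieZab K L)
    (hg : IsGammaTwoPrime g) :
    LinearMap.range g ≤ LinearMap.ker (hw.gradedMap 1 le_rfl) := by
  rw [LinearMap.range_le_ker_iff]
  refine TensorProduct.ext_threefold' fun x y z => ?_
  induction x using Submodule.Quotient.induction_on
  induction y using Submodule.Quotient.induction_on
  induction z using Submodule.Quotient.induction_on
  rw [LinearMap.comp_apply, hg, map_add, map_add, lieBr23, lieBr23, lieBr23, hw.gradedMap_tmul,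
    hw.gradedMap_tmul, hw.gradedMap_tmul, LinearMap.zero_apply, ← Submodule.Quotient.mk_add,
    ← Submodule.Quotient.mk_add, hw.jacobi, Submodule.Quotient.mk_zero]

variable [FiniteDimensional K L]

theorem finrank_map_mkQ_pairingFiltration_zero_le :
    finrank K ((pairingFiltration w 0).map (pairingFiltration w 1).mkQ) ≤
      finrank K (⋀[K]^2 (L ⧸ lieLcs K L 1)) :=
  (Submodule.finrank_mono hw.map_mkQ_pairingFiltration_zero_le_range).trans
    (LinearMap.finrank_range_le _)

theorem finrank_map_mkQ_pairingFiltration_le (j : ℕ) (hj : 1 ≤ j) :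
    finrank K ((pairingFiltration w j).map (pairingFiltration w (j + 1)).mkQ) ≤
      finrank K
        ((↥(lieLcs K L j) ⧸ (lieLcs K L (j + 1)).comap (lieLcs K L j).subtype) ⊗[K] lieZab K L) :=
  (Submodule.finrank_mono (hw.map_mkQ_pairingFiltration_le_range_gradedMap j hj)).trans
    (LinearMap.finrank_range_le _)

theorem finrank_map_mkQ_pairingFiltration_one_add_finrank_range_le
    (g : (lieZab K L ⊗[K] (lieZab K L ⊗[K] lieZab K L)) →ₗ[K] lieQ23 K L ⊗[K] lieZab K L)
    (hg : IsGammaTwoPrime g) :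
    finrank K ((pairingFiltration w 1).map (pairingFiltration w 2).mkQ)
        + finrank K (LinearMap.range g) ≤ finrank K (lieQ23 K L ⊗[K] lieZab K L) := by
  rw [← (hw.gradedMap 1 le_rfl).finrank_range_add_finrank_ker]
  exact add_le_add
    (Submodule.finrank_mono (hw.map_mkQ_pairingFiltration_le_range_gradedMap 1 le_rfl))
    (Submodule.finrank_mono (hw.range_le_ker_gradedMap_one g hg))

theorem finrank_add_finrank_range_le (hspan : Submodule.map₂ w ⊤ ⊤ = ⊤) {c : ℕ}
    (hc : LieModule.lowerCentralSeries K L L c = ⊥) (hc2 : 2 ≤ c)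
    (g : (lieZab K L ⊗[K] (lieZab K L ⊗[K] lieZab K L)) →ₗ[K] lieQ23 K L ⊗[K] lieZab K L)
    (hg : IsGammaTwoPrime g) :
    finrank K E + finrank K (LinearMap.range g) ≤
      finrank K (⋀[K]^2 (L ⧸ lieLcs K L 1)) + ∑ i ∈ Finset.Icc 2 c, finrank K
        ((↥(lieLcs K L (i - 1)) ⧸ (lieLcs K L i).comap (lieLcs K L (i - 1)).subtype)
          ⊗[K] lieZab K L) := by
  have : FiniteDimensional K E := by
    rw [TensorProduct.map₂_eq_range_lift_comp_mapIncl] at hspan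
    exact Module.Finite.of_surjective _ (LinearMap.range_eq_top.mp hspan)
  have hE := Submodule.finrank_eq_sum_finrank_map_mkQ_add (pairingFiltration_antitone w) c
  rw [pairingFiltration_zero, hspan, finrank_top, pairingFiltration_eq_bot w hc, finrank_bot,
    add_zero, Finset.range_eq_Ico, Finset.sum_eq_sum_Ico_succ_bot (by omega),
    Finset.sum_eq_sum_Ico_succ_bot (by omega)] at hE
  rw [← Finset.Ico_add_one_right_eq_Icc, Finset.sum_eq_sum_Ico_succ_bot (by omega),
    ← Finset.sum_Ico_add' _ 2 c 1, hE, add_assoc, add_right_comm _ _ (finrank K _)]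
  exact add_le_add hw.finrank_map_mkQ_pairingFiltration_zero_le
    (add_le_add (hw.finrank_map_mkQ_pairingFiltration_one_add_finrank_range_le g hg)
      (Finset.sum_le_sum fun j hj =>
        hw.finrank_map_mkQ_pairingFiltration_le j (one_le_two.trans (Finset.mem_Ico.mp hj).1)))

end IsExteriorPairing

end LieAlgebra

namespace LieHom

variable {K : Type} [Field K] {F L : Type} [LieRing F] [LieAlgebra K F] [LieRing L]
  [LieAlgebra K L] (π : F →ₗ⁅K⁆ L)

abbrev hopfQuotient : Type :=
  ↥(lieLcs K F 1) ⧸ Submodule.comap (lieLcs K F 1).subtype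
    ((⁅π.ker, (⊤ : LieIdeal K F)⁆ : LieIdeal K F) : Submodule K F)

noncomputable def bracketClass : F →ₗ[K] F →ₗ[K] π.hopfQuotient :=
  LinearMap.mk₂ K (fun f g => Submodule.Quotient.mk ⟨⁅f, g⁆, lie_mem_lowerCentral_one K f g⟩)
    (fun _ _ _ => by rw [← Submodule.Quotient.mk_add]; exact congrArg _ (Subtype.ext (add_lie ..)))
    (fun _ _ _ => by rw [← Submodule.Quotient.mk_smul]; exact congrArg _ (Subtype.ext (smul_lie ..)))
    (fun _ _ _ => by rw [← Submodule.Quotient.mk_add]; exact congrArg _ (Subtype.ext (lie_add ..)))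
    (fun _ _ _ => by rw [← Submodule.Quotient.mk_smul]; exact congrArg _ (Subtype.ext (lie_smul ..)))

theorem bracketClass_apply (f g : F) :
    π.bracketClass f g = Submodule.Quotient.mk ⟨⁅f, g⁆, lie_mem_lowerCentral_one K f g⟩ :=
  rfl

theorem isExteriorPairing_bracketClass : LieAlgebra.IsExteriorPairing π.bracketClass where
  apply_self f := by
    rw [bracketClass_apply, Submodule.Quotient.mk_eq_zero]
    show ⁅f, f⁆ ∈ (⁅π.ker, ⊤⁆ : LieIdeal K F)
    rw [lie_self]
    exact zero_mem _
  apply_lie f g h := by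
    rw [bracketClass_apply, bracketClass_apply, bracketClass_apply, ← Submodule.Quotient.mk_add]
    congr 1
    exact Subtype.ext (leibniz_lie f g h)

theorem bracketClass_eq_zero_of_mem_ker {r : F} (hr : r ∈ π.ker) (f : F) :
    π.bracketClass r f = 0 :=
  (Submodule.Quotient.mk_eq_zero _).mpr (LieSubmodule.lie_mem_lie hr (LieSubmodule.mem_top f))

theorem map₂_bracketClass_eq_top : Submodule.map₂ π.bracketClass ⊤ ⊤ = ⊤ := by
  set S := Submodule.map₂ π.bracketClass ⊤ ⊤
  have hS : S.comap (Submodule.mkQ _) = ⊤ := by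
    apply Submodule.map_injective_of_injective (lieLcs K F 1).injective_subtype
    rw [Submodule.map_subtype_top]
    refine le_antisymm (Submodule.map_subtype_le _ _) (lieLcs_one_le fun f g => ?_)
    exact ⟨_, Submodule.apply_mem_map₂ π.bracketClass trivial trivial, rfl⟩
  rw [← Submodule.map_comap_eq_of_surjective (Submodule.mkQ_surjective _) S, hS,
    Submodule.map_top, Submodule.range_mkQ]

variable {π} (hπ : Function.Surjective π)

noncomputable def presentationPairing : L →ₗ[K] L →ₗ[K] π.hopfQuotient :=
  let e := π.toLinearMap.quotKerEquivOfSurjective hπ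
  (LinearMap.liftQ₂ (LinearMap.ker π.toLinearMap) (LinearMap.ker π.toLinearMap) π.bracketClass
    (fun r hr => LinearMap.ext (π.bracketClass_eq_zero_of_mem_ker hr))
    (fun r hr => LinearMap.ext fun f => by
      rw [LinearMap.flip_apply, π.isExteriorPairing_bracketClass.apply_swap,
        π.bracketClass_eq_zero_of_mem_ker hr, neg_zero, LinearMap.zero_apply])).compl₁₂
    e.symm.toLinearMap e.symm.toLinearMap

theorem presentationPairing_apply_apply (f g : F) :
    presentationPairing hπ (π f) (π g) = π.bracketClass f g := by
  have hsymm (f : F) : ((π.toLinearMap.quotKerEquivOfSurjective hπ).symm :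
      L →ₗ[K] F ⧸ LinearMap.ker π.toLinearMap) (π f) = Submodule.Quotient.mk f :=
    LinearMap.quotKerEquivOfSurjective_symm_apply _ hπ f
  rw [presentationPairing, LinearMap.compl₁₂_apply, hsymm, hsymm]
  rfl

theorem isExteriorPairing_presentationPairing :
    LieAlgebra.IsExteriorPairing (presentationPairing hπ) :=
  .of_surjective hπ π.isExteriorPairing_bracketClass (presentationPairing_apply_apply hπ)

theorem map₂_presentationPairing_eq_top : Submodule.map₂ (presentationPairing hπ) ⊤ ⊤ = ⊤ :=
  top_unique <| π.map₂_bracketClass_eq_top.ge.trans <| Submodule.map₂_le.mpr fun f _ g _ =>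
    presentationPairing_apply_apply hπ f g ▸ Submodule.apply_mem_map₂ _ trivial trivial

end LieHom

/-- for a finite-dimensional non-abelian nilpotent Lie algebra `L` of
class `c`, `dim(L ∧ L) + dim Im γ'₂ ≤ dim(L/L² ∧ L/L²) +
Σ_{i=2}^c dim(γ_i(L)/γ_{i+1}(L) ⊗ (L/Z(L))^{ab})`, where `γ'₂` is the linear map
`((L/Z(L))^{ab})^{⊗3} → (L²/L³) ⊗ (L/Z(L))^{ab}` with
`x̄ ⊗ ȳ ⊗ z̄ ↦ ([x,y]+L³)⊗z̄ + ([z,x]+L³)⊗ȳ + ([y,z]+L³)⊗x̄`, and `L ∧ L` is the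
nonabelian exterior square `F²/[R,F]` computed from any free presentation of `L`. -/
theorem exterior_square_bound (K L : Type) [Field K] [LieRing L] [LieAlgebra K L]
    [FiniteDimensional K L] (c : ℕ) (hna : ¬IsLieAbelian L)
    (hc : lieNilpotencyClass K L c) :
    ∀ g : ((lieZab K L) ⊗[K] ((lieZab K L) ⊗[K] (lieZab K L))) →ₗ[K]
        ((lieQ23 K L) ⊗[K] (lieZab K L)),
      (∀ x y z : L,
        g ((lieLcs K L 1 ⊔ ((LieAlgebra.center K L : LieIdeal K L) : Submodule K L)).mkQ x
            ⊗ₜ ((lieLcs K L 1 ⊔ ((LieAlgebra.center K L : LieIdeal K L) : Submodule K L)).mkQ y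
              ⊗ₜ (lieLcs K L 1 ⊔ ((LieAlgebra.center K L : LieIdeal K L) : Submodule K L)).mkQ z)) =
          lieBr23 K x y ⊗ₜ (lieLcs K L 1 ⊔ ((LieAlgebra.center K L : LieIdeal K L) : Submodule K L)).mkQ z
            + lieBr23 K z x ⊗ₜ (lieLcs K L 1 ⊔ ((LieAlgebra.center K L : LieIdeal K L) : Submodule K L)).mkQ y
            + lieBr23 K y z ⊗ₜ (lieLcs K L 1 ⊔ ((LieAlgebra.center K L : LieIdeal K L) : Submodule K L)).mkQ x) →
      ∀ (X : Type) (π : FreeLieAlgebra K X →ₗ⁅K⁆ L), Function.Surjective π →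
        lieExteriorSquareDim K X π + Module.finrank K ↥(LinearMap.range g) ≤
          Module.finrank K ↥(⋀[K]^2 (L ⧸ lieLcs K L 1))
            + ∑ i ∈ Finset.Icc 2 c,
                Module.finrank K
                  ((↥(lieLcs K L (i - 1)) ⧸
                      Submodule.comap (lieLcs K L (i - 1)).subtype (lieLcs K L i))
                    ⊗[K] (lieZab K L)) := by
  intro g hg X π hπ
  have hc2 : 2 ≤ c := by
    by_contra! h
    refine hna ((LieModule.trivial_iff_lower_central_eq_bot K L L).mpr (eq_bot_iff.mpr ?_))
    exact hc.1 ▸ LieModule.antitone_lowerCentralSeries K L L (Nat.le_of_lt_succ h)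
  exact (π.isExteriorPairing_presentationPairing hπ).finrank_add_finrank_range_le
    (π.map₂_presentationPairing_eq_top hπ) hc.1 hc2 g hg
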